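/- Every one-dimensional dyadic polytope (a dyadic interval [a,c] ∩ D with a < c dyadic) has exactly three nonempty walls: the two singleton endpoints {a}, {c}, and the whole interval itself. -/

import Mathlib

/-!
If a wall `A` of `C = D ∩ [a, c]` contains a point `m > a`, it contains `c`: when `m` lies in the
upper half of `C`, it is the midpoint of `2m - c` and `c`; otherwise it is the midpoint of `a` and
`2m - a`, so `2m - a ∈ A`, a point twice as far from `a`, and we repeat. Reflecting, a point `m < c`
of `A` forces `a ∈ A`. Once both endpoints lie in `A`, so does `(a + c) / 2`, the midpoint of every
pair `x, a + c - x` in `C`, hence `A = C`. Otherwise `A` is a nonempty subset of `{a}` or `{c}`.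
-/

def IsDyadic (x : ℝ) : Prop := ∃ k : ℤ, ∃ n : ℕ, x = (k : ℝ) / 2 ^ n

def IsWall (C A : Set ℝ) : Prop :=
  A ⊆ C ∧ ∀ a ∈ C, ∀ b ∈ C, ((a + b) / 2 ∈ A ↔ a ∈ A ∧ b ∈ A)

namespace IsDyadic

variable {x y : ℝ}

lemma add (hx : IsDyadic x) (hy : IsDyadic y) : IsDyadic (x + y) := by
  obtain ⟨k, n, rfl⟩ := hx
  obtain ⟨l, m, rfl⟩ := hy
  refine ⟨k * 2 ^ m + l * 2 ^ n, n + m, ?_⟩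
  push_cast
  rw [pow_add, div_add_div _ _ (by positivity) (by positivity),
    div_eq_div_iff (by positivity) (by positivity)]
  ring

lemma neg (hx : IsDyadic x) : IsDyadic (-x) := by
  obtain ⟨k, n, rfl⟩ := hx
  exact ⟨-k, n, by push_cast; ring⟩

lemma sub (hx : IsDyadic x) (hy : IsDyadic y) : IsDyadic (x - y) := by
  simpa only [sub_eq_add_neg] using hx.add hy.neg

lemma two_mul_sub (hx : IsDyadic x) (hy : IsDyadic y) : IsDyadic (2 * x - y) := by
  simpa only [two_mul] using (hx.add hx).sub hy

lemma half (hx : IsDyadic x) : IsDyadic (x / 2) := by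
  obtain ⟨k, n, rfl⟩ := hx
  exact ⟨k, n + 1, by rw [pow_succ]; ring⟩

end IsDyadic

lemma isDyadic_neg_iff {x : ℝ} : IsDyadic (-x) ↔ IsDyadic x :=
  ⟨fun h => by simpa only [neg_neg] using h.neg, IsDyadic.neg⟩

namespace IsWall

variable {C A : Set ℝ}

lemma mem_of_add_eq_two_mul (hA : IsWall C A) {x y m : ℝ} (hx : x ∈ C) (hy : y ∈ C)
    (hxy : x + y = 2 * m) (hm : m ∈ A) : x ∈ A ∧ y ∈ A :=
  (hA.2 x hx y hy).1 (by rwa [hxy, mul_div_cancel_left₀ m two_ne_zero])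

lemma neg (hA : IsWall C A) : IsWall (-C) (-A) := by
  refine ⟨Set.neg_subset_neg.2 hA.1, fun x hx y hy => ?_⟩
  have hmid : -((x + y) / 2) = (-x + -y) / 2 := by ring
  simpa only [Set.mem_neg, hmid] using hA.2 (-x) hx (-y) hy

end IsWall

lemma isWall_self {C : Set ℝ} (hC : ∀ x ∈ C, ∀ y ∈ C, (x + y) / 2 ∈ C) : IsWall C C :=
  ⟨le_rfl, fun x hx y hy => ⟨fun _ => ⟨hx, hy⟩, fun _ => hC x hx y hy⟩⟩

lemma isWall_singleton_of_isLeast {C : Set ℝ} {a : ℝ} (ha : IsLeast C a) : IsWall C {a} := by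
  refine ⟨Set.singleton_subset_iff.2 ha.1, fun x hx y hy => ?_⟩
  have hax := ha.2 hx
  have hay := ha.2 hy
  simp only [Set.mem_singleton_iff]
  constructor
  · intro h
    constructor <;> linarith
  · rintro ⟨rfl, rfl⟩
    ring

lemma isWall_singleton_of_isGreatest {C : Set ℝ} {c : ℝ} (hc : IsGreatest C c) :
    IsWall C {c} := by
  refine ⟨Set.singleton_subset_iff.2 hc.1, fun x hx y hy => ?_⟩
  have hxc := hc.2 hx
  have hyc := hc.2 hy
  simp only [Set.mem_singleton_iff]
  constructor
  · intro h
    constructor <;> linarith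
  · rintro ⟨rfl, rfl⟩
    ring

def dyadicIcc (a c : ℝ) : Set ℝ := {x | IsDyadic x ∧ a ≤ x ∧ x ≤ c}

section dyadicIcc

variable {a c : ℝ}

lemma neg_dyadicIcc : -dyadicIcc a c = dyadicIcc (-c) (-a) := by
  ext x
  simp only [dyadicIcc, Set.mem_neg, Set.mem_ofPred_eq, isDyadic_neg_iff, le_neg, neg_le]
  tauto

lemma isLeast_dyadicIcc (ha : IsDyadic a) (hac : a ≤ c) : IsLeast (dyadicIcc a c) a :=
  ⟨⟨ha, le_rfl, hac⟩, fun _ hx => hx.2.1⟩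

lemma isGreatest_dyadicIcc (hc : IsDyadic c) (hac : a ≤ c) : IsGreatest (dyadicIcc a c) c :=
  ⟨⟨hc, hac, le_rfl⟩, fun _ hx => hx.2.2⟩

lemma midpoint_mem_dyadicIcc {x y : ℝ} (hx : x ∈ dyadicIcc a c) (hy : y ∈ dyadicIcc a c) :
    (x + y) / 2 ∈ dyadicIcc a c :=
  ⟨(hx.1.add hy.1).half, by linarith [hx.2.1, hy.2.1], by linarith [hx.2.2, hy.2.2]⟩

variable (ha : IsDyadic a) (hc : IsDyadic c) {A : Set ℝ} (hA : IsWall (dyadicIcc a c) A)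
include ha hc hA

lemma IsWall.right_mem_of_le_pow_mul (n : ℕ) :
    ∀ m ∈ A, c - a ≤ 2 ^ n * (m - a) → c ∈ A := by
  induction n with
  | zero =>
    intro m hm hle
    obtain ⟨-, -, hmc⟩ := hA.1 hm
    rwa [le_antisymm hmc (by linarith)] at hm
  | succ n ih =>
    intro m hm hle
    obtain ⟨hmd, ham, hmc⟩ := hA.1 hm
    by_cases hupper : (a + c) / 2 ≤ m
    · have hreflect : 2 * m - c ∈ dyadicIcc a c := ⟨hmd.two_mul_sub hc, by linarith, by linarith⟩
      exact (hA.mem_of_add_eq_two_mul hreflect (isGreatest_dyadicIcc hc (ham.trans hmc)).1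
        (by ring) hm).2
    · have hreflect : 2 * m - a ∈ dyadicIcc a c := ⟨hmd.two_mul_sub ha, by linarith, by linarith⟩
      refine ih (2 * m - a) (hA.mem_of_add_eq_two_mul hreflect
        (isLeast_dyadicIcc ha (ham.trans hmc)).1 (by ring) hm).1 ?_
      rw [pow_succ] at hle
      linarith

lemma IsWall.right_mem_of_lt {m : ℝ} (hm : m ∈ A) (ham : a < m) : c ∈ A := by
  obtain ⟨n, hn⟩ := pow_unbounded_of_one_lt ((c - a) / (m - a)) one_lt_two
  rw [div_lt_iff₀ (sub_pos.2 ham)] at hn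
  exact hA.right_mem_of_le_pow_mul ha hc n m hm hn.le

lemma IsWall.left_mem_of_lt {m : ℝ} (hm : m ∈ A) (hmc : m < c) : a ∈ A := by
  have hA' : IsWall (dyadicIcc (-c) (-a)) (-A) := neg_dyadicIcc ▸ hA.neg
  simpa only [Set.mem_neg, neg_neg] using
    hA'.right_mem_of_lt hc.neg ha.neg (Set.neg_mem_neg.2 hm) (neg_lt_neg hmc)

lemma IsWall.eq_dyadicIcc (haA : a ∈ A) (hcA : c ∈ A) : A = dyadicIcc a c := by
  have hmid : (a + c) / 2 ∈ A := (hA.2 a (hA.1 haA) c (hA.1 hcA)).2 ⟨haA, hcA⟩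
  refine hA.1.antisymm fun x hx => ?_
  have hreflect : a + c - x ∈ dyadicIcc a c :=
    ⟨(ha.add hc).sub hx.1, by linarith [hx.2.2], by linarith [hx.2.1]⟩
  exact (hA.mem_of_add_eq_two_mul hx hreflect (by ring) hmid).1

end dyadicIcc

theorem walls_of_dyadic_interval (a c : ℝ) (ha : IsDyadic a) (hc : IsDyadic c)
    (hac : a < c) :
    ∀ A : Set ℝ, (A.Nonempty ∧ IsWall {x : ℝ | IsDyadic x ∧ a ≤ x ∧ x ≤ c} A) ↔
      (A = {a} ∨ A = {c} ∨ A = {x : ℝ | IsDyadic x ∧ a ≤ x ∧ x ≤ c}) := by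
  intro A
  change (A.Nonempty ∧ IsWall (dyadicIcc a c) A) ↔ (A = {a} ∨ A = {c} ∨ A = dyadicIcc a c)
  constructor
  · rintro ⟨hne, hA⟩
    by_cases hAa : A ⊆ {a}
    · exact Or.inl (hne.subset_singleton_iff.1 hAa)
    by_cases hAc : A ⊆ {c}
    · exact Or.inr (Or.inl (hne.subset_singleton_iff.1 hAc))
    obtain ⟨m, hmA, hma⟩ := Set.not_subset.1 hAa
    obtain ⟨m', hm'A, hm'c⟩ := Set.not_subset.1 hAc
    have hcA := hA.right_mem_of_lt ha hc hmA ((hA.1 hmA).2.1.lt_of_ne' hma)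
    have haA := hA.left_mem_of_lt ha hc hm'A ((hA.1 hm'A).2.2.lt_of_ne hm'c)
    exact Or.inr (Or.inr (hA.eq_dyadicIcc ha hc haA hcA))
  · rintro (rfl | rfl | rfl)
    · exact ⟨Set.singleton_nonempty a, isWall_singleton_of_isLeast (isLeast_dyadicIcc ha hac.le)⟩
    · exact ⟨Set.singleton_nonempty c,
        isWall_singleton_of_isGreatest (isGreatest_dyadicIcc hc hac.le)⟩
    · exact ⟨⟨a, (isLeast_dyadicIcc ha hac.le).1⟩,
        isWall_self fun _ hx _ hy => midpoint_mem_dyadicIcc hx hy⟩
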